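/- For finite types X and Z, let p_n and p_a be joint probability mass functions on X × Z such that p_a(x,z) > 0 whenever p_n(x,z) > 0, and p_n_Z(z) > 0 for relevant z. Then the joint KL divergence is bounded below by the mutual information minus the entropy of the latent marginal: KL[p_n ‖ p_a] ≥ I_{p_n}(X;Z) − H(p_n_Z). -/

import Mathlib

open Finset Real MeasureTheory

noncomputable section

/-- A probability mass function on a finite type. -/
def IsPmf {Ω : Type*} [Fintype Ω] (p : Ω → ℝ) : Prop :=
  (∀ ω, 0 ≤ p ω) ∧ ∑ ω, p ω = 1

/-- KL divergence between pmfs on a finite type.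
(The convention `0 · log (0 / q ω) = 0` holds automatically since `Real.log 0 = 0`.) -/
def KL {Ω : Type*} [Fintype Ω] (p q : Ω → ℝ) : ℝ :=
  ∑ ω, p ω * Real.log (p ω / q ω)

/-- Marginal on the first component of a joint pmf. -/
def margX {X Z : Type*} [Fintype X] [Fintype Z] (p : X × Z → ℝ) (x : X) : ℝ :=
  ∑ z, p (x, z)

/-- Marginal on the second component of a joint pmf. -/
def margZ {X Z : Type*} [Fintype X] [Fintype Z] (p : X × Z → ℝ) (z : Z) : ℝ :=
  ∑ x, p (x, z)

/-- Conditional pmf of `z` given `x`. -/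
def condZ {X Z : Type*} [Fintype X] [Fintype Z] (p : X × Z → ℝ) (x : X) (z : Z) : ℝ :=
  p (x, z) / margX p x

/-- Conditional pmf of `x` given `z`. -/
def condX {X Z : Type*} [Fintype X] [Fintype Z] (p : X × Z → ℝ) (z : Z) (x : X) : ℝ :=
  p (x, z) / margZ p z

/-- Shannon entropy of a pmf on a finite type. -/
def entropy {Ω : Type*} [Fintype Ω] (p : Ω → ℝ) : ℝ :=
  -∑ ω, p ω * Real.log (p ω)

/-- Cross entropy between two pmfs on a finite type. -/
def crossEnt {Ω : Type*} [Fintype Ω] (p q : Ω → ℝ) : ℝ :=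
  -∑ ω, p ω * Real.log (q ω)

/-- Mutual information of a joint pmf on `X × Z`. -/
def mutualInfo {X Z : Type*} [Fintype X] [Fintype Z] (p : X × Z → ℝ) : ℝ :=
  KL p (fun xz => margX p xz.1 * margZ p xz.2)

/-
Gibbs' inequality gives `KL[p_n ‖ p_a] ≥ 0`, while `I(X;Z) − H(Z) = −H(Z|X)` is the
expectation of `log p(z|x) ≤ 0`, so the right-hand side is nonpositive.
-/

lemma sub_le_mul_log_div {p q : ℝ} (hp : 0 ≤ p) (hq : 0 ≤ q) (hpq : 0 < p → 0 < q) :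
    p - q ≤ p * log (p / q) := by
  rcases hp.eq_or_lt with rfl | hp
  · simpa using hq
  have hq := hpq hp
  have h := one_sub_inv_le_log_of_pos (div_pos hp hq)
  rw [inv_div] at h
  calc p - q = p * (1 - q / p) := by field_simp
    _ ≤ p * log (p / q) := mul_le_mul_of_nonneg_left h hp.le

theorem KL_nonneg {Ω : Type*} [Fintype Ω] {p q : Ω → ℝ} (hp : IsPmf p) (hq : IsPmf q)
    (hpq : ∀ ω, 0 < p ω → 0 < q ω) : 0 ≤ KL p q :=
  calc (0 : ℝ) = ∑ ω, (p ω - q ω) := by rw [sum_sub_distrib, hp.2, hq.2, sub_self]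
    _ ≤ KL p q := sum_le_sum fun ω _ => sub_le_mul_log_div (hp.1 ω) (hq.1 ω) (hpq ω)

section Marginals

variable {X Z : Type*} [Fintype X] [Fintype Z] {p : X × Z → ℝ}

lemma le_margX (hp : ∀ ω, 0 ≤ p ω) (x : X) (z : Z) : p (x, z) ≤ margX p x :=
  single_le_sum (fun z _ => hp (x, z)) (mem_univ z)

lemma le_margZ (hp : ∀ ω, 0 ≤ p ω) (x : X) (z : Z) : p (x, z) ≤ margZ p z :=
  single_le_sum (fun x _ => hp (x, z)) (mem_univ x)

lemma condZ_le_one (hp : ∀ ω, 0 ≤ p ω) (x : X) (z : Z) : condZ p x z ≤ 1 :=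
  div_le_one_of_le₀ (le_margX hp x z) ((hp _).trans (le_margX hp x z))

lemma entropy_margZ (p : X × Z → ℝ) :
    entropy (margZ p) = crossEnt p (fun ω => margZ p ω.2) := by
  simp only [entropy, crossEnt, Fintype.sum_prod_type, margZ, sum_mul]
  rw [sum_comm]

lemma mutualInfo_sub_entropy_margZ (hp : ∀ ω, 0 ≤ p ω) :
    mutualInfo p - entropy (margZ p) = ∑ ω, p ω * log (condZ p ω.1 ω.2) := by
  rw [entropy_margZ, mutualInfo, KL, crossEnt, sub_neg_eq_add, ← sum_add_distrib]
  refine sum_congr rfl fun ⟨x, z⟩ _ => ?_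
  rcases (hp (x, z)).eq_or_lt with h0 | h0
  · simp [← h0]
  have hX := h0.trans_le (le_margX hp x z)
  have hZ := h0.trans_le (le_margZ hp x z)
  rw [← mul_add, condZ, log_div h0.ne' (mul_pos hX hZ).ne', log_mul hX.ne' hZ.ne',
    log_div h0.ne' hX.ne']
  ring

theorem mutualInfo_le_entropy_margZ (hp : ∀ ω, 0 ≤ p ω) :
    mutualInfo p ≤ entropy (margZ p) := by
  rw [← sub_nonpos, mutualInfo_sub_entropy_margZ hp]
  refine sum_nonpos fun ⟨x, z⟩ _ => mul_nonpos_of_nonneg_of_nonpos (hp _) ?_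
  exact log_nonpos (div_nonneg (hp _) (sum_nonneg fun z _ => hp (x, z))) (condZ_le_one hp x z)

end Marginals

theorem kl_ge_mutualInfo_sub_entropy_general {X Z : Type*} [Fintype X] [Fintype Z]
    (pn pa : X × Z → ℝ) (hpn : IsPmf pn) (hpa : IsPmf pa)
    (hpos : ∀ x z, 0 < pn (x, z) → 0 < pa (x, z)) :
    KL pn pa ≥ mutualInfo pn - entropy (margZ pn) := by
  have hKL : 0 ≤ KL pn pa := KL_nonneg hpn hpa fun ω => hpos ω.1 ω.2
  have hMI : mutualInfo pn ≤ entropy (margZ pn) := mutualInfo_le_entropy_margZ hpn.1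
  linarith

/-- The joint KL divergence is bounded below by the mutual information minus the
entropy of the latent marginal: `KL[p_n ‖ p_a] ≥ I(X;Z) − H(p_nZ)`. -/
theorem kl_ge_mutualInfo_sub_entropy {X Z : Type*} [Fintype X] [Fintype Z]
    (pn pa : X × Z → ℝ) (hpn : IsPmf pn) (hpa : IsPmf pa)
    (hpos : ∀ x z, 0 < pn (x, z) → 0 < pa (x, z))
    (hZ : ∀ x z, 0 < pn (x, z) → 0 < margZ pn z) :
    KL pn pa ≥ mutualInfo pn - entropy (margZ pn) :=
  kl_ge_mutualInfo_sub_entropy_general pn pa hpn hpa hpos
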